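/- The number of walks of length n from (0,0) to (0,0) on D_2 satisfies, for the generating function F(t) = Σ_{n≥0} f(n) t^n (as a formal power series), the identity (1 - 4t³ - t⁶)·F(t) = 1 - 3t³. -/

import Mathlib

/-!
Splitting off the first step of a walk gives, on the six vertices of `D_2`, the three-step
recurrences `f(n+3) = 2 g(n) + f(n)` and `g(n+3) = 3 g(n) + 2 f(n)`, where `g(n)` counts walks
from `(1,1)` to the origin; eliminating `g` yields `f(n+6) = 4 f(n+3) + f(n)`. Every edge raises
`i + 2j` by `2` modulo `3`, so `f(n) = 0` unless `3 ∣ n`, and with `f(0) = f(3) = 1` the recurrence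
pins down `F`.
-/

def Dedge (k : ℕ) (p q : ℕ × ℕ) : Prop :=
  p.1 + p.2 ≤ k ∧ q.1 + q.2 ≤ k ∧
    (q = (p.1, p.2 + 1) ∨ (q.1 + 1 = p.1 ∧ q.2 = p.2) ∨
      (q.1 = p.1 + 1 ∧ q.2 + 1 = p.2))

def Walk (k n : ℕ) (u v : ℕ × ℕ) : Type :=
  { f : Fin (n + 1) → ℕ × ℕ // f 0 = u ∧ f (Fin.last n) = v ∧
      ∀ i : Fin n, Dedge k (f i.castSucc) (f i.succ) }

noncomputable def walkCount (k n : ℕ) (u v : ℕ × ℕ) : ℕ := Nat.card (Walk k n u v)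

open Finset

instance (k : ℕ) : DecidableRel (Dedge k) := fun _ _ => by
  unfold Dedge; infer_instance

def succs (k : ℕ) (u : ℕ × ℕ) : Finset (ℕ × ℕ) :=
  (range (k + 1) ×ˢ range (k + 1)).filter (Dedge k u)

theorem mem_succs {k : ℕ} {u w : ℕ × ℕ} : w ∈ succs k u ↔ Dedge k u w := by
  simp only [succs, mem_filter, mem_product, mem_range, and_iff_right_iff_imp]
  rintro ⟨-, hw, -⟩
  omega

namespace Walk

instance (k : ℕ) (u v : ℕ × ℕ) : Subsingleton (Walk k 0 u v) :=
  ⟨fun a b => Subtype.ext <| funext fun i => by rw [Fin.fin_one_eq_zero i, a.2.1, b.2.1]⟩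

def firstStepEquiv (k n : ℕ) (u v : ℕ × ℕ) :
    Walk k (n + 1) u v ≃ Σ w : succs k u, Walk k n w v where
  toFun x := ⟨⟨x.1 1, mem_succs.2 (by simpa [x.2.1] using x.2.2.2 0)⟩,
    ⟨Fin.tail x.1, rfl, by simpa [Fin.tail] using x.2.2.1, fun i => x.2.2.2 i.succ⟩⟩
  invFun y := ⟨Fin.cons u y.2.1, rfl, by simpa [← Fin.succ_last] using y.2.2.2.1,
    Fin.cases (by simpa [y.2.2.1] using mem_succs.1 y.1.2) fun i => y.2.2.2.2 i⟩
  left_inv x := Subtype.ext <| by simp [← x.2.1]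
  right_inv y := Sigma.subtype_ext (Subtype.ext y.2.2.1) (funext fun _ => rfl)

instance finite (k n : ℕ) (u v : ℕ × ℕ) : Finite (Walk k n u v) := by
  induction n generalizing u with
  | zero => infer_instance
  | succ n ih => exact Finite.of_equiv _ (firstStepEquiv k n u v).symm

end Walk

theorem walkCount_zero (k : ℕ) (u v : ℕ × ℕ) : walkCount k 0 u v = if u = v then 1 else 0 := by
  split_ifs with h
  · subst h
    have : Inhabited (Walk k 0 u u) := ⟨fun _ => u, rfl, rfl, nofun⟩
    exact Nat.card_unique
  · have : IsEmpty (Walk k 0 u v) := ⟨fun x => h (x.2.1.symm.trans x.2.2.1)⟩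
    exact Nat.card_of_isEmpty

theorem walkCount_succ (k n : ℕ) (u v : ℕ × ℕ) :
    walkCount k (n + 1) u v = ∑ w ∈ succs k u, walkCount k n w v := by
  rw [walkCount, Nat.card_congr (Walk.firstStepEquiv k n u v), Nat.card_sigma]
  exact sum_coe_sort (succs k u) fun w => walkCount k n w v

theorem succs_two_zero_zero : succs 2 (0, 0) = {(0, 1)} := by decide
theorem succs_two_zero_one : succs 2 (0, 1) = {(0, 2), (1, 0)} := by decide
theorem succs_two_zero_two : succs 2 (0, 2) = {(1, 1)} := by decide
theorem succs_two_one_zero : succs 2 (1, 0) = {(0, 0), (1, 1)} := by decide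
theorem succs_two_one_one : succs 2 (1, 1) = {(0, 1), (2, 0)} := by decide
theorem succs_two_two_zero : succs 2 (2, 0) = {(1, 0)} := by decide

theorem walkCount_two_add_three_zero_zero (n : ℕ) (v : ℕ × ℕ) :
    walkCount 2 (n + 3) (0, 0) v = 2 * walkCount 2 n (1, 1) v + walkCount 2 n (0, 0) v := by
  simp [walkCount_succ, succs_two_zero_zero, succs_two_zero_one, succs_two_zero_two,
    succs_two_one_zero]
  ring

theorem walkCount_two_add_three_one_one (n : ℕ) (v : ℕ × ℕ) :
    walkCount 2 (n + 3) (1, 1) v = 3 * walkCount 2 n (1, 1) v + 2 * walkCount 2 n (0, 0) v := by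
  simp [walkCount_succ, succs_two_one_one, succs_two_zero_one, succs_two_zero_two,
    succs_two_one_zero, succs_two_two_zero]
  ring

theorem walkCount_two_add_six_zero_zero (n : ℕ) (v : ℕ × ℕ) :
    walkCount 2 (n + 6) (0, 0) v = 4 * walkCount 2 (n + 3) (0, 0) v + walkCount 2 n (0, 0) v := by
  have h₁ := walkCount_two_add_three_zero_zero (n + 3) v
  have h₂ := walkCount_two_add_three_one_one n v
  have h₃ := walkCount_two_add_three_zero_zero n v
  rw [show n + 6 = n + 3 + 3 from rfl]
  omega

theorem Dedge.modEq {k : ℕ} {u w : ℕ × ℕ} (h : Dedge k u w) :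
    w.1 + 2 * w.2 ≡ u.1 + 2 * u.2 + 2 [MOD 3] := by
  obtain ⟨-, -, rfl | ⟨h₁, h₂⟩ | ⟨h₁, h₂⟩⟩ := h <;> simp only [Nat.ModEq] <;> omega

theorem walkCount_eq_zero_of_not_modEq {k n : ℕ} {u v : ℕ × ℕ}
    (h : ¬u.1 + 2 * u.2 + 2 * n ≡ v.1 + 2 * v.2 [MOD 3]) : walkCount k n u v = 0 := by
  induction n generalizing u with
  | zero =>
    rw [walkCount_zero, if_neg]
    rintro rfl
    exact h rfl
  | succ n ih =>
    rw [walkCount_succ]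
    refine sum_eq_zero fun w hw => ih fun hw' => h ?_
    have := (mem_succs.1 hw).modEq
    simp only [Nat.ModEq] at *
    omega

namespace PowerSeries

theorem mk_eq_C_add_X_pow_mul_mk {R : Type*} [Semiring R] {a : ℕ → R} {p : ℕ} (hp : 0 < p)
    (ha : ∀ i, 0 < i → i < p → a i = 0) : mk a = C (a 0) + X ^ p * mk fun n => a (n + p) := by
  ext n
  rw [map_add, coeff_mk, coeff_C, coeff_X_pow_mul', coeff_mk]
  rcases Nat.eq_zero_or_pos n with rfl | hn
  · simp [hp.ne']
  · rw [if_neg hn.ne', zero_add]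
    split_ifs with h
    · rw [Nat.sub_add_cancel h]
    · exact ha n hn (by omega)

theorem one_sub_four_mul_X_pow_three_sub_X_pow_six_mul_mk {R : Type*} [CommRing R] {a : ℕ → R}
    (h₀ : a 0 = 1) (h₁ : a 1 = 0) (h₂ : a 2 = 0) (h₃ : a 3 = 1) (h₄ : a 4 = 0) (h₅ : a 5 = 0)
    (hrec : ∀ n, a (n + 6) = 4 * a (n + 3) + a n) :
    (1 - 4 * X ^ 3 - X ^ 6) * mk a = 1 - 3 * X ^ 3 := by
  have hF : mk a = 1 + X ^ 3 * mk fun n => a (n + 3) := by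
    rw [mk_eq_C_add_X_pow_mul_mk three_pos fun i _ _ => by interval_cases i <;> assumption,
      h₀, map_one]
  have hF₃ : (mk fun n => a (n + 3)) = 1 + X ^ 3 * mk fun n => a (n + 6) := by
    rw [mk_eq_C_add_X_pow_mul_mk three_pos fun i _ _ => by interval_cases i <;> assumption]
    simp [h₃]
  have hF₆ : (mk fun n => a (n + 6)) = 4 * (mk fun n => a (n + 3)) + mk a := by
    ext n
    rw [← map_ofNat C 4]
    simp [hrec]
  linear_combination (1 - 4 * X ^ 3) * hF + X ^ 3 * hF₃ + X ^ 6 * hF₆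

end PowerSeries

/-- Generating function identity for closed walks at `(0,0)` in `D_2`:
`(1 - 4t³ - t⁶)·F(t) = 1 - 3t³`. -/
theorem stmt5 :
    (1 - 4 * (PowerSeries.X : PowerSeries ℚ) ^ 3 - PowerSeries.X ^ 6) *
        PowerSeries.mk (fun n => (walkCount 2 n (0, 0) (0, 0) : ℚ)) =
      1 - 3 * PowerSeries.X ^ 3 := by
  apply PowerSeries.one_sub_four_mul_X_pow_three_sub_X_pow_six_mul_mk
  · simp [walkCount_zero]
  · exact_mod_cast walkCount_eq_zero_of_not_modEq (by decide)
  · exact_mod_cast walkCount_eq_zero_of_not_modEq (by decide)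
  · simp [walkCount_two_add_three_zero_zero, walkCount_zero]
  · exact_mod_cast walkCount_eq_zero_of_not_modEq (by decide)
  · exact_mod_cast walkCount_eq_zero_of_not_modEq (by decide)
  · exact_mod_cast (walkCount_two_add_six_zero_zero · (0, 0))
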